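/- arXiv:1707.02355 — 4 statements merged into one kernel-verified Lean document; each statement's English description precedes it below -/
import Mathlib

section
/- The function z ↦ ∫_ℝ (2πℏ)^{-1/2} exp(-(z-x)²/(2ℏ)) ψ(x) dx is holomorphic on ℂ for every ψ ∈ L²(ℝ). -/
/-!
On the unit disc around `z₀`, `|exp (-(z - x)² / (2ℏ))| = exp ((Im z² - (Re z - x)²) / (2ℏ))` is
bounded by a constant times the Gaussian `exp (-(x - Re z₀)² / (4ℏ))`, and the `z`-derivative
`-(z - x) / ℏ` of the exponent grows only linearly in `x`. Gaussians times polynomials lie in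
`L²(ℝ)`, so by Cauchy–Schwarz both the integrand and its `z`-derivative are dominated by integrable
functions of `x`, uniformly on the disc; differentiation under the integral sign concludes.
-/

open MeasureTheory Complex Real

/-- The integrand of the Segal--Bargmann transform on `ℝ`: the analytically continued
heat kernel `ρ_ℏ(z - x) = (2πℏ)^{-1/2} e^{-(z-x)²/(2ℏ)}` times `ψ(x)`. -/
noncomputable def sbKernel (ℏ : ℝ) (ψ : ℝ → ℂ) (z : ℂ) (x : ℝ) : ℂ :=
  ((Real.sqrt (2 * π * ℏ) : ℝ) : ℂ)⁻¹
    * Complex.exp (-(z - (x : ℂ)) ^ 2 / (2 * (ℏ : ℂ))) * ψ x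

/-- The Segal--Bargmann transform `(C_ℏ ψ)(z) = ∫ ρ_ℏ(z-x) ψ(x) dx` on `ℝ`. -/
noncomputable def sbTransform (ℏ : ℝ) (ψ : ℝ → ℂ) (z : ℂ) : ℂ :=
  ∫ x : ℝ, sbKernel ℏ ψ z x

open Metric

lemma memLp_two_abs_pow_mul_exp_neg_mul_sq {b : ℝ} (hb : 0 < b) (n : ℕ) :
    MemLp (fun u : ℝ => |u| ^ n * rexp (-b * u ^ 2)) 2 volume := by
  rw [memLp_two_iff_integrable_sq (by fun_prop : Continuous _).aestronglyMeasurable]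
  refine (integrable_rpow_mul_exp_neg_mul_sq (mul_pos two_pos hb) (s := (2 * n : ℕ))
    (by linarith [(2 * n).cast_nonneg (α := ℝ)])).congr (.of_forall fun u => ?_)
  dsimp only
  rw [Real.rpow_natCast, mul_pow, ← pow_mul', ← Real.exp_nat_mul]
  simp only [pow_mul, sq_abs]
  ring_nf

lemma integrable_mul_norm_of_memLp_two {E : Type*} [NormedAddCommGroup E] {φ : ℝ → ℝ}
    (hφ : MemLp φ 2 volume) (c : ℝ) {f : ℝ → E} (hf : MemLp f 2 volume) :
    Integrable (fun x => φ (c - x) * ‖f x‖) volume :=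
  (hφ.comp_measurePreserving (volume.measurePreserving_sub_left c)).integrable_mul hf.norm

lemma norm_cexp_neg_sq_div (ℏ : ℝ) (w : ℂ) :
    ‖cexp (-w ^ 2 / (2 * ℏ))‖ = rexp ((w.im ^ 2 - w.re ^ 2) / (2 * ℏ)) := by
  rw [Complex.norm_exp, show (2 * ℏ : ℂ) = ((2 * ℏ : ℝ) : ℂ) by push_cast; ring,
    Complex.div_ofReal_re]
  simp only [neg_re, sq, mul_re]
  ring_nf

lemma norm_cexp_neg_sq_div_le {ℏ : ℝ} (hℏ : 0 < ℏ) {w w₀ : ℂ} (hw : ‖w - w₀‖ ≤ 1) :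
    ‖cexp (-w ^ 2 / (2 * ℏ))‖ ≤
      rexp (((|w₀.im| + 1) ^ 2 + 1) / (2 * ℏ)) * rexp (-(4 * ℏ)⁻¹ * w₀.re ^ 2) := by
  have him : |w.im - w₀.im| ≤ 1 := by simpa using (abs_im_le_norm (w - w₀)).trans hw
  have hre : |w.re - w₀.re| ≤ 1 := by simpa using (abs_re_le_norm (w - w₀)).trans hw
  have him_sq : w.im ^ 2 ≤ (|w₀.im| + 1) ^ 2 := by
    rw [← sq_abs w.im]
    have := abs_sub_abs_le_abs_sub w.im w₀.im
    gcongr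
    linarith
  -- `w₀.re ^ 2 ≤ 2 * w.re ^ 2 + 2 * (w.re - w₀.re) ^ 2`: half of the decay survives the shift.
  have hre_sq : w₀.re ^ 2 / 2 - 1 ≤ w.re ^ 2 := by
    nlinarith [sq_nonneg (w.re + (w.re - w₀.re)), abs_le.1 hre, sq_abs (w.re - w₀.re)]
  rw [norm_cexp_neg_sq_div, ← Real.exp_add, Real.exp_le_exp]
  have h2ℏ : 0 < 2 * ℏ := by positivity
  calc (w.im ^ 2 - w.re ^ 2) / (2 * ℏ)
      ≤ ((|w₀.im| + 1) ^ 2 + 1 - w₀.re ^ 2 / 2) / (2 * ℏ) := by gcongr ?_ / _; linarith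
    _ = ((|w₀.im| + 1) ^ 2 + 1) / (2 * ℏ) + -(4 * ℏ)⁻¹ * w₀.re ^ 2 := by field_simp; ring

lemma norm_sbKernel (ℏ : ℝ) (ψ : ℝ → ℂ) (z : ℂ) (x : ℝ) :
    ‖sbKernel ℏ ψ z x‖ = (√(2 * π * ℏ))⁻¹ * ‖cexp (-(z - x) ^ 2 / (2 * ℏ))‖ * ‖ψ x‖ := by
  rw [sbKernel, norm_mul, norm_mul, norm_inv, norm_real, Real.norm_of_nonneg (Real.sqrt_nonneg _)]

lemma exists_norm_sbKernel_le {ℏ : ℝ} (hℏ : 0 < ℏ) (ψ : ℝ → ℂ) (z₀ : ℂ) :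
    ∃ A, 0 ≤ A ∧ ∀ z, ‖z - z₀‖ ≤ 1 → ∀ x : ℝ,
      ‖sbKernel ℏ ψ z x‖ ≤ A * (rexp (-(4 * ℏ)⁻¹ * (z₀.re - x) ^ 2) * ‖ψ x‖) := by
  refine ⟨(√(2 * π * ℏ))⁻¹ * rexp (((|z₀.im| + 1) ^ 2 + 1) / (2 * ℏ)), by positivity,
    fun z hz x => ?_⟩
  have hw : ‖(z - x) - (z₀ - x)‖ ≤ 1 := by rwa [sub_sub_sub_cancel_right]
  have hexp := norm_cexp_neg_sq_div_le hℏ hw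
  simp only [sub_re, sub_im, ofReal_re, ofReal_im, sub_zero] at hexp
  rw [norm_sbKernel]
  calc _ ≤ (√(2 * π * ℏ))⁻¹ * (rexp (((|z₀.im| + 1) ^ 2 + 1) / (2 * ℏ))
        * rexp (-(4 * ℏ)⁻¹ * (z₀.re - x) ^ 2)) * ‖ψ x‖ := by gcongr
    _ = _ := by ring

lemma integrable_sbKernel {ℏ : ℝ} (hℏ : 0 < ℏ) {ψ : ℝ → ℂ} (hψ : MemLp ψ 2 volume) (z : ℂ) :
    Integrable (sbKernel ℏ ψ z) volume := by
  obtain ⟨A, -, hA⟩ := exists_norm_sbKernel_le hℏ ψ z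
  have hgauss : Integrable (fun x => rexp (-(4 * ℏ)⁻¹ * (z.re - x) ^ 2) * ‖ψ x‖) := by
    simpa using integrable_mul_norm_of_memLp_two
      (memLp_two_abs_pow_mul_exp_neg_mul_sq (b := (4 * ℏ)⁻¹) (by positivity) 0) z.re hψ
  refine (hgauss.const_mul A).mono' ?_ (.of_forall (hA z (by simp)))
  exact (by fun_prop : Continuous fun x : ℝ => _).aestronglyMeasurable.mul hψ.1

lemma hasDerivAt_sbKernel (ℏ : ℝ) (ψ : ℝ → ℂ) (z : ℂ) (x : ℝ) :
    HasDerivAt (sbKernel ℏ ψ · x) (-(z - x) / ℏ * sbKernel ℏ ψ z x) z := by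
  have hexp : HasDerivAt (fun z : ℂ => -(z - x) ^ 2 / (2 * ℏ)) (-(2 * (z - x)) / (2 * ℏ)) z := by
    simpa using (((hasDerivAt_id z).sub_const (x : ℂ)).pow 2).neg.div_const (2 * (ℏ : ℂ))
  refine ((hexp.cexp.const_mul ((√(2 * π * ℏ) : ℝ) : ℂ)⁻¹).mul_const (ψ x)).congr_deriv ?_
  rw [sbKernel]
  ring

lemma exists_integrable_bound_deriv_sbKernel {ℏ : ℝ} (hℏ : 0 < ℏ) {ψ : ℝ → ℂ}
    (hψ : MemLp ψ 2 volume) (z₀ : ℂ) :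
    ∃ bound : ℝ → ℝ, Integrable bound volume ∧
      ∀ x : ℝ, ∀ z ∈ ball z₀ 1, ‖-(z - x) / ℏ * sbKernel ℏ ψ z x‖ ≤ bound x := by
  obtain ⟨A, hA0, hA⟩ := exists_norm_sbKernel_le hℏ ψ z₀
  set G : ℝ → ℝ := fun x => rexp (-(4 * ℏ)⁻¹ * (z₀.re - x) ^ 2) * ‖ψ x‖ with hG
  have hweight (n : ℕ) := integrable_mul_norm_of_memLp_two
    (memLp_two_abs_pow_mul_exp_neg_mul_sq (b := (4 * ℏ)⁻¹) (by positivity) n) z₀.re hψ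
  have hlin : Integrable (fun x => |z₀.re - x| * G x) := by simpa [hG, mul_assoc] using hweight 1
  have hgauss : Integrable G := by simpa [hG] using hweight 0
  refine ⟨fun x => A / ℏ * (|z₀.re - x| * G x + (|z₀.im| + 1) * G x),
    (hlin.add (hgauss.const_mul _)).const_mul _, fun x z hz => ?_⟩
  have hz' : ‖z - z₀‖ ≤ 1 := (mem_ball_iff_norm.1 hz).le
  have hdist : ‖z - x‖ ≤ |z₀.re - x| + (|z₀.im| + 1) := calc
    ‖z - x‖ ≤ ‖z - z₀‖ + ‖z₀ - x‖ := norm_sub_le_norm_sub_add_norm_sub _ _ _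
    _ ≤ 1 + (|z₀.re - x| + |z₀.im|) := by
        gcongr
        simpa using norm_le_abs_re_add_abs_im (z₀ - x)
    _ = _ := by ring
  calc ‖-(z - x) / ℏ * sbKernel ℏ ψ z x‖ = ‖z - x‖ / ℏ * ‖sbKernel ℏ ψ z x‖ := by
        rw [norm_mul, norm_div, norm_neg, norm_real, Real.norm_of_nonneg hℏ.le]
    _ ≤ (|z₀.re - x| + (|z₀.im| + 1)) / ℏ * (A * G x) := by
        gcongr
        exact hA z hz' x
    _ = _ := by ring

/-- for every `ψ ∈ L²(ℝ)`, the integral defining `(C_ℏψ)(z)` converges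
absolutely for every `z`, and `C_ℏψ` is holomorphic on all of `ℂ`. -/
theorem segal_bargmann_transform_holomorphic
    (ℏ : ℝ) (hℏ : 0 < ℏ) (ψ : ℝ → ℂ) (hψ : MemLp ψ 2 volume) :
    (∀ z : ℂ, Integrable (fun x : ℝ => sbKernel ℏ ψ z x)) ∧
    Differentiable ℂ (sbTransform ℏ ψ) := by
  have hint := integrable_sbKernel hℏ hψ
  refine ⟨hint, fun z₀ => ?_⟩
  obtain ⟨bound, hbound_int, hbound⟩ := exists_integrable_bound_deriv_sbKernel hℏ hψ z₀
  have hderiv_meas : AEStronglyMeasurable (fun x : ℝ => -(z₀ - x) / ℏ * sbKernel ℏ ψ z₀ x) :=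
    (by fun_prop : Continuous fun x : ℝ => -(z₀ - x) / ℏ).aestronglyMeasurable.mul (hint z₀).1
  exact (hasDerivAt_integral_of_dominated_loc_of_deriv_le (ball_mem_nhds z₀ one_pos)
    (.of_forall fun z => (hint z).1) (hint z₀) hderiv_meas (.of_forall hbound) hbound_int
    (.of_forall fun x z _ => hasDerivAt_sbKernel ℏ ψ z x)).2.differentiableAt
end

section
/- For the Segal–Bargmann transform on ℝ and any ψ in a dense domain (e.g., Schwartz functions), the inversion formula holds: ψ(x) = ∫_ℝ (C_ℏψ)(x+2ib) ν_{ℏ/2}(ib) db, where ν_{t}(ib) = (πt)^{-1/2} e^{-b²/t}. -/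
open MeasureTheory Complex Real FourierTransform

lemma poly_bound (P : Polynomial ℂ) :
    ∃ C : ℝ, 0 ≤ C ∧ ∀ z : ℂ, ‖P.eval z‖ ≤ C * (1 + ‖z‖) ^ P.natDegree := by
  refine ⟨∑ i ∈ Finset.range (P.natDegree + 1), ‖P.coeff i‖, by positivity, fun z => ?_⟩
  rw [Polynomial.eval_eq_sum_range]
  calc ‖∑ i ∈ Finset.range (P.natDegree + 1), P.coeff i * z ^ i‖
      ≤ ∑ i ∈ Finset.range (P.natDegree + 1), ‖P.coeff i * z ^ i‖ := norm_sum_le _ _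
    _ ≤ ∑ i ∈ Finset.range (P.natDegree + 1), ‖P.coeff i‖ * (1 + ‖z‖) ^ P.natDegree := by
        refine Finset.sum_le_sum fun i hi => ?_
        rw [norm_mul, norm_pow]
        refine mul_le_mul_of_nonneg_left ?_ (norm_nonneg _)
        calc ‖z‖ ^ i ≤ (1 + ‖z‖) ^ i := by
              apply pow_le_pow_left₀ (norm_nonneg z); linarith [norm_nonneg z]
          _ ≤ (1 + ‖z‖) ^ P.natDegree := by
              apply pow_le_pow_right₀ (by linarith [norm_nonneg z])
              have := Finset.mem_range.1 hi; omega
    _ = _ := by rw [← Finset.sum_mul]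

lemma gauss_hasDerivAt (x : ℝ) (ℏ : ℝ) (y : ℝ) :
    HasDerivAt (fun y : ℝ => Complex.exp (-((x : ℂ) - y) ^ 2 / (2 * (ℏ : ℂ))))
      (Complex.exp (-((x : ℂ) - y) ^ 2 / (2 * (ℏ : ℂ))) * (((x : ℂ) - y) / ℏ)) y := by
  have h1 : HasDerivAt (fun z : ℂ => Complex.exp (-((x : ℂ) - z) ^ 2 / (2 * (ℏ : ℂ))))
      (Complex.exp (-((x : ℂ) - (y:ℝ)) ^ 2 / (2 * (ℏ : ℂ)))
        * (-(2 * ((x : ℂ) - (y:ℝ)) ^ 1 * (-1)) / (2 * (ℏ : ℂ)))) ((y:ℝ) : ℂ) := by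
    exact ((((hasDerivAt_id ((y:ℝ):ℂ)).const_sub (x:ℂ)).pow 2).neg.div_const (2 * (ℏ:ℂ))).cexp
  have h2 := h1.comp_ofReal
  convert h2 using 1
  have : ((x : ℂ) - y) / ℏ = -(2 * ((x : ℂ) - (y:ℝ)) ^ 1 * (-1)) / (2 * (ℏ : ℂ)) := by
    rw [show -(2 * ((x : ℂ) - (y:ℝ)) ^ 1 * (-1)) = 2 * ((x:ℂ) - (y:ℝ)) by ring,
      mul_div_mul_left _ _ (two_ne_zero)]
  rw [this]

lemma gauss_iteratedDeriv (x ℏ : ℝ) (n : ℕ) :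
    ∃ P : Polynomial ℂ, ∀ y : ℝ,
      iteratedDeriv n (fun y : ℝ => Complex.exp (-((x : ℂ) - y) ^ 2 / (2 * (ℏ : ℂ)))) y
        = P.eval (y : ℂ) * Complex.exp (-((x : ℂ) - y) ^ 2 / (2 * (ℏ : ℂ))) := by
  set G : ℝ → ℂ := fun y : ℝ => Complex.exp (-((x : ℂ) - y) ^ 2 / (2 * (ℏ : ℂ))) with hG
  induction n with
  | zero => exact ⟨1, fun y => by simp [iteratedDeriv_zero, hG]⟩
  | succ n ih =>
    obtain ⟨P, hP⟩ := ih
    refine ⟨P.derivative + P * (Polynomial.C ((x : ℂ) / ℏ) - Polynomial.C (((ℏ : ℂ))⁻¹) * Polynomial.X),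
      fun y => ?_⟩
    rw [iteratedDeriv_succ, funext hP]
    have hd : HasDerivAt (fun y : ℝ => P.eval ((y : ℝ) : ℂ) * G y)
        (P.derivative.eval ((y:ℝ) : ℂ) * G y + P.eval ((y:ℝ) : ℂ) * (G y * (((x : ℂ) - y) / ℏ))) y :=
      HasDerivAt.mul ((P.hasDerivAt ((y:ℝ):ℂ)).comp_ofReal) (gauss_hasDerivAt x ℏ y)
    rw [hd.deriv]
    simp only [Polynomial.eval_add, Polynomial.eval_mul, Polynomial.eval_sub, Polynomial.eval_C,
      Polynomial.eval_X]
    have : ((x : ℂ) - y) / ℏ = (x : ℂ) / ℏ - ((ℏ : ℂ))⁻¹ * (y : ℂ) := by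
      rw [sub_div]; ring
    rw [this]; ring

lemma gauss_temperate (x : ℝ) {ℏ : ℝ} (hℏ : 0 < ℏ) :
    Function.HasTemperateGrowth (fun y : ℝ => Complex.exp (-((x : ℂ) - y) ^ 2 / (2 * (ℏ : ℂ)))) := by
  constructor
  · apply Complex.contDiff_exp.comp
    exact (((contDiff_const.sub Complex.ofRealCLM.contDiff).pow 2).neg).div_const _
  · intro n
    obtain ⟨P, hP⟩ := gauss_iteratedDeriv x ℏ n
    obtain ⟨C, hC0, hC⟩ := poly_bound P
    refine ⟨P.natDegree, C, fun y => ?_⟩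
    rw [norm_iteratedFDeriv_eq_norm_iteratedDeriv, hP y]
    have hGle : ‖Complex.exp (-((x : ℂ) - y) ^ 2 / (2 * (ℏ : ℂ)))‖ ≤ 1 := by
      have : -((x : ℂ) - y) ^ 2 / (2 * (ℏ : ℂ)) = ((-(x - y) ^ 2 / (2 * ℏ) : ℝ) : ℂ) := by
        push_cast; ring
      rw [this, ← Complex.ofReal_exp, Complex.norm_real, Real.norm_eq_abs,
        abs_of_pos (Real.exp_pos _), Real.exp_le_one_iff]
      have h1 : (0:ℝ) ≤ (x - y)^2 := sq_nonneg _
      have h2 : (0:ℝ) < 2 * ℏ := by linarith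
      exact div_nonpos_of_nonpos_of_nonneg (by linarith) h2.le
    calc ‖P.eval ((y:ℝ):ℂ) * Complex.exp (-((x : ℂ) - y) ^ 2 / (2 * (ℏ : ℂ)))‖
        = ‖P.eval ((y:ℝ):ℂ)‖ * ‖Complex.exp (-((x : ℂ) - y) ^ 2 / (2 * (ℏ : ℂ)))‖ := norm_mul _ _
      _ ≤ ‖P.eval ((y:ℝ):ℂ)‖ * 1 := mul_le_mul_of_nonneg_left hGle (norm_nonneg _)
      _ ≤ C * (1 + ‖y‖) ^ P.natDegree := by
          rw [mul_one]
          simpa [Complex.norm_real] using hC ((y:ℝ):ℂ)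


/-- the inversion formula for the Segal--Bargmann transform on `ℝ`: for
Schwartz `ψ`, the position wave function is recovered from the phase-space wave function
by integrating out the momentum: `ψ(x) = ∫_ℝ (C_ℏψ)(x + 2ib) ν_{ℏ/2}(ib) db`, with
`ν_t(ib) = (πt)^{-1/2} e^{-b²/t}`. -/
theorem segal_bargmann_inversion
    (ℏ : ℝ) (hℏ : 0 < ℏ) (ψ : SchwartzMap ℝ ℂ) (x : ℝ) :
    ψ x = ∫ b : ℝ, sbTransform ℏ (fun y => ψ y) ((x : ℂ) + 2 * (b : ℂ) * Complex.I)
        * (((Real.sqrt (π * (ℏ / 2)))⁻¹ * Real.exp (-b ^ 2 / (ℏ / 2)) : ℝ) : ℂ) := by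
  have hℏc : (ℏ : ℂ) ≠ 0 := by exact_mod_cast hℏ.ne'
  have hπ : (π : ℂ) ≠ 0 := by exact_mod_cast Real.pi_ne_zero
  have hπℏ : 0 < π * ℏ := by positivity
  set G : ℝ → ℂ := fun y : ℝ => Complex.exp (-((x : ℂ) - y) ^ 2 / (2 * (ℏ : ℂ))) with hGdef
  have hg : Function.HasTemperateGrowth G := gauss_temperate x hℏ
  set g : SchwartzMap ℝ ℂ := SchwartzMap.bilinLeftCLM (ContinuousLinearMap.mul ℝ ℂ) hg ψ with hgdef
  have hgapp : ∀ y : ℝ, g y = ψ y * G y := fun y => rfl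
  set c₁ : ℂ := ((Real.sqrt (2 * π * ℏ) : ℝ) : ℂ)⁻¹ with hc₁
  set c₂ : ℝ := (Real.sqrt (π * (ℏ / 2)))⁻¹ with hc₂
  have h𝓕int : Integrable (𝓕 ⇑g) := by
    simpa [SchwartzMap.fourier_coe] using (SchwartzMap.fourierTransformCLM ℂ g).integrable (μ := volume)
  -- pointwise identity in y (and b)
  have key : ∀ b y : ℝ,
      sbKernel ℏ (fun y => ψ y) ((x : ℂ) + 2 * (b:ℂ) * Complex.I) y
          * ((c₂ * Real.exp (-b ^ 2 / (ℏ / 2)) : ℝ) : ℂ)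
        = (c₁ * (c₂:ℂ) * Complex.exp (-2 * Complex.I * b * x / ℏ))
          * (Complex.exp (((-2 * π * y * (-b / (π * ℏ)) : ℝ) : ℂ) * Complex.I) • g y) := by
    intro b y
    rw [hgapp y]
    have hE : (-(((x:ℂ) + 2*(b:ℂ)*Complex.I) - y)^2 / (2*(ℏ:ℂ))) + ((-b^2/(ℏ/2) : ℝ) : ℂ)
        = (-2 * Complex.I * b * x / ℏ) + (((-2 * π * y * (-b / (π * ℏ)) : ℝ) : ℂ) * Complex.I)
          + (-((x:ℂ) - y)^2 / (2*(ℏ:ℂ))) := by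
      push_cast
      field_simp
      ring_nf
      rw [Complex.I_sq]
      ring_nf
    calc sbKernel ℏ (fun y => ψ y) ((x : ℂ) + 2 * (b:ℂ) * Complex.I) y
          * ((c₂ * Real.exp (-b ^ 2 / (ℏ / 2)) : ℝ) : ℂ)
        = c₁ * (c₂:ℂ) * ψ y
            * Complex.exp ((-(((x:ℂ) + 2*(b:ℂ)*Complex.I) - y)^2 / (2*(ℏ:ℂ)))
              + ((-b^2/(ℏ/2) : ℝ) : ℂ)) := by
          rw [Complex.exp_add, sbKernel]
          push_cast
          ring
      _ = c₁ * (c₂:ℂ) * ψ y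
            * Complex.exp ((-2 * Complex.I * b * x / ℏ)
              + (((-2 * π * y * (-b / (π * ℏ)) : ℝ) : ℂ) * Complex.I)
              + (-((x:ℂ) - y)^2 / (2*(ℏ:ℂ)))) := by rw [hE]
      _ = _ := by
          rw [Complex.exp_add, Complex.exp_add, smul_eq_mul, hGdef]
          ring
  have step1 : ∀ b : ℝ,
      sbTransform ℏ (fun y => ψ y) ((x : ℂ) + 2 * (b:ℂ) * Complex.I)
          * ((c₂ * Real.exp (-b ^ 2 / (ℏ / 2)) : ℝ) : ℂ)
        = (c₁ * (c₂:ℂ) * Complex.exp (-2 * Complex.I * b * x / ℏ)) * 𝓕 (⇑g) (-b / (π * ℏ)) := by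
    intro b
    rw [sbTransform, ← integral_mul_const, Real.fourier_real_eq_integral_exp_smul,
      ← integral_const_mul]
    exact integral_congr_ae (Filter.Eventually.of_forall fun y => key b y)
  set H : ℝ → ℂ := fun ξ =>
    (c₁ * (c₂:ℂ)) * (Complex.exp (((-2 * π * ξ * (-x) : ℝ) : ℂ) * Complex.I) • 𝓕 (⇑g) ξ) with hH
  have hmatch : ∀ b : ℝ,
      (c₁ * (c₂:ℂ) * Complex.exp (-2 * Complex.I * b * x / ℏ)) * 𝓕 (⇑g) (-b / (π * ℏ))
        = H ((-(π*ℏ))⁻¹ * b) := by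
    intro b
    have harg : (-(π*ℏ))⁻¹ * b = -b / (π*ℏ) := by field_simp
    rw [hH]
    simp only [harg, smul_eq_mul]
    have hc : ((-2 * π * (-b/(π*ℏ)) * (-x) : ℝ) : ℂ) * Complex.I
        = -2 * Complex.I * b * x / ℏ := by
      have h1 : (-2 * π * (-b/(π*ℏ)) * (-x) : ℝ) = -(2*b*x/ℏ) := by
        field_simp
      rw [h1]; push_cast; ring
    rw [hc]; ring
  symm
  calc ∫ b : ℝ, sbTransform ℏ (fun y => ψ y) ((x : ℂ) + 2 * (b:ℂ) * Complex.I)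
          * ((c₂ * Real.exp (-b ^ 2 / (ℏ / 2)) : ℝ) : ℂ)
      = ∫ b : ℝ, H ((-(π*ℏ))⁻¹ * b) :=
        integral_congr_ae (Filter.Eventually.of_forall fun b => (step1 b).trans (hmatch b))
    _ = |(-(π*ℏ))| • ∫ ξ : ℝ, H ξ := MeasureTheory.Measure.integral_comp_inv_mul_left H (-(π*ℏ))
    _ = (π*ℏ) • ((c₁ * (c₂:ℂ)) * 𝓕 (𝓕 (⇑g)) (-x)) := by
        rw [abs_neg, abs_of_pos hπℏ]
        congr 1
        rw [hH, Real.fourier_real_eq_integral_exp_smul (𝓕 (⇑g)) (-x), ← integral_const_mul]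
    _ = (π*ℏ) • ((c₁ * (c₂:ℂ)) * g x) := by
        rw [← Real.fourierInv_eq_fourier_neg,
          g.continuous.fourierInv_fourier_eq (g.integrable (μ := volume)) h𝓕int]
    _ = ψ x := by
        rw [hgapp x]
        have hGx : G x = 1 := by simp [hGdef]
        rw [hGx, mul_one]
        have hs : Real.sqrt (2*π*ℏ) * Real.sqrt (π*(ℏ/2)) = π*ℏ := by
          rw [← Real.sqrt_mul (by positivity), show (2*π*ℏ)*(π*(ℏ/2)) = (π*ℏ)^2 by ring,
            Real.sqrt_sq hπℏ.le]
        have hcc : c₁ * (c₂:ℂ) = ((π*ℏ : ℝ):ℂ)⁻¹ := by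
          rw [hc₁, hc₂, Complex.ofReal_inv, ← mul_inv, ← Complex.ofReal_mul, hs]
        rw [hcc, Complex.real_smul, ← mul_assoc,
          mul_inv_cancel₀ (Complex.ofReal_ne_zero.2 hπℏ.ne'), one_mul]
end

section
/- With Δ_N the bi-invariant Laplacian on U(N) for the inner product ⟨X,Y⟩_N = N·Trace(X*Y), for every positive integer k: Δ_N(U^k) = -k U^k - 2 Σ_{m=1}^{k-1} m U^m tr(U^{k-m}), where tr denotes the normalized trace tr(A) = (1/N)Trace(A), and Δ_N acts entrywise on the matrix-valued function U ↦ U^k. -/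
open Matrix MeasureTheory
open scoped BigOperators

/-- The normalized trace `tr(A) = (1/N) Trace(A)`. -/
noncomputable def ntr {N : ℕ} (A : Matrix (Fin N) (Fin N) ℂ) : ℂ :=
  (N : ℂ)⁻¹ * Matrix.trace A

/-- `X` is skew-Hermitian, i.e. an element of the Lie algebra `u(N)`. -/
def IsSkewHerm {N : ℕ} (X : Matrix (Fin N) (Fin N) ℂ) : Prop := Xᴴ = -X

/-- `X : ι → u(N)` is an orthonormal basis of the real vector space `u(N)` of
skew-Hermitian matrices with respect to the inner product `⟨X,Y⟩_N = N·Re Trace(XᴴY)`: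
each `X i` is skew-Hermitian, the family is orthonormal, and every skew-Hermitian
matrix is the sum of its components along the `X i`. -/
def IsONB {N : ℕ} {ι : Type} [Fintype ι] [DecidableEq ι] (X : ι → Matrix (Fin N) (Fin N) ℂ) : Prop :=
  (∀ i, IsSkewHerm (X i)) ∧
  (∀ i j, (N : ℝ) * (Matrix.trace ((X i)ᴴ * X j)).re = if i = j then 1 else 0) ∧
  (∀ A : Matrix (Fin N) (Fin N) ℂ, IsSkewHerm A →
    A = ∑ i, ((N : ℝ) * (Matrix.trace ((X i)ᴴ * A)).re) • X i)

/-- The bi-invariant Laplacian `Δ_N = Σ_i ∂_{X_i}²` on scalar functions, where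
`(∂_X f)(U) = d/ds|₀ f(U e^{sX})`, for the orthonormal basis `X` of `u(N)`. -/
noncomputable def lap {N : ℕ} {ι : Type} [Fintype ι] (X : ι → Matrix (Fin N) (Fin N) ℂ)
    (f : Matrix (Fin N) (Fin N) ℂ → ℂ) (U : Matrix (Fin N) (Fin N) ℂ) : ℂ :=
  ∑ i, iteratedDeriv 2 (fun s : ℝ => f (U * NormedSpace.exp (s • X i))) 0

/-- The Laplacian `Δ_N` acting entrywise on matrix-valued functions. -/
noncomputable def mlap {N : ℕ} {ι : Type} [Fintype ι] (X : ι → Matrix (Fin N) (Fin N) ℂ)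
    (f : Matrix (Fin N) (Fin N) ℂ → Matrix (Fin N) (Fin N) ℂ)
    (U : Matrix (Fin N) (Fin N) ℂ) : Matrix (Fin N) (Fin N) ℂ :=
  Matrix.of fun j k => lap X (fun V => f V j k) U

/-!
Differentiating `t ↦ (U e^{tY})^{k+1} = U e^{tY} · (U e^{tY})^k` twice at `0` gives the recursion
`∂_Y²(V^{k+1}) = U ∂_Y²(V^k) + 2 U Y ∑_{i<k} U^{k-i} Y U^i + U Y² U^k`.
Summing over an orthonormal basis of `u(N)`, the completeness relation
`∑_i X_i ⊗ X_i = -(1/N) · swap` gives the Casimir identity `∑_i X_i B X_i = -tr(B) · 1`,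
which turns every `Y ⋯ Y` sandwich into a normalized trace. The resulting recursion
`Δ(V^{k+1}) = U Δ(V^k) - 2 ∑_{m<k} tr(U^{k-m}) U^{m+1} - U^{k+1}` is solved by the stated formula.
-/

open Finset

theorem ContinuousLinearMap.iteratedDeriv_comp_left {𝕜 F G : Type*} [NontriviallyNormedField 𝕜]
    [NormedAddCommGroup F] [NormedSpace 𝕜 F] [NormedAddCommGroup G] [NormedSpace 𝕜 G]
    (L : F →L[𝕜] G) {f : 𝕜 → F} {x : 𝕜} {n : ℕ} (hf : ContDiffAt 𝕜 n f x) :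
    iteratedDeriv n (L ∘ f) x = L (iteratedDeriv n f x) := by
  simp only [iteratedDeriv_eq_iteratedFDeriv, L.iteratedFDeriv_comp_left hf le_rfl,
    ContinuousLinearMap.compContinuousMultilinearMap_coe, Function.comp_apply]

section LeftInvariantCurve

variable {𝔸 : Type*} [NormedRing 𝔸] [NormedAlgebra ℝ 𝔸] {γ : ℝ → 𝔸} {Y : 𝔸}

theorem contDiff_of_hasDerivAt_mul_const (hγ : ∀ t, HasDerivAt γ (γ t * Y) t) (n : ℕ) :
    ContDiff ℝ n γ := by
  induction n with
  | zero => exact contDiff_zero.2 (continuous_iff_continuousAt.2 fun t => (hγ t).continuousAt)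
  | succ n ih =>
    rw [Nat.cast_succ, contDiff_succ_iff_deriv]
    refine ⟨fun t => (hγ t).differentiableAt, by simp, ?_⟩
    rw [funext fun t => (hγ t).deriv]
    exact ih.mul contDiff_const

theorem iteratedDeriv_two_of_hasDerivAt_mul_const (hγ : ∀ t, HasDerivAt γ (γ t * Y) t) (t : ℝ) :
    iteratedDeriv 2 γ t = γ t * Y * Y := by
  rw [iteratedDeriv_succ, iteratedDeriv_one, funext fun t => (hγ t).deriv]
  exact ((hγ t).mul_const Y).deriv

theorem deriv_pow_of_hasDerivAt_mul_const (hγ : ∀ t, HasDerivAt γ (γ t * Y) t) (k : ℕ) (t : ℝ) :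
    deriv (fun s => γ s ^ k) t = ∑ i ∈ range k, γ t ^ (k - i) * Y * γ t ^ i := by
  rw [((hγ t).fun_pow' k).deriv]
  refine sum_congr rfl fun i hi => ?_
  have : k - 1 - i + 1 = k - i := by have := mem_range.1 hi; omega
  simp [← mul_assoc, ← pow_succ, this]

theorem iteratedDeriv_two_pow_succ_of_hasDerivAt_mul_const (hγ : ∀ t, HasDerivAt γ (γ t * Y) t)
    (k : ℕ) (t : ℝ) :
    iteratedDeriv 2 (fun s => γ s ^ (k + 1)) t
      = γ t * iteratedDeriv 2 (fun s => γ s ^ k) t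
        + 2 * (γ t * Y * ∑ i ∈ range k, γ t ^ (k - i) * Y * γ t ^ i) + γ t * Y * Y * γ t ^ k := by
  have hsmooth := contDiff_of_hasDerivAt_mul_const hγ 2
  simp only [pow_succ']
  rw [iteratedDeriv_fun_mul hsmooth.contDiffAt (hsmooth.pow k).contDiffAt]
  simp [sum_range_succ, iteratedDeriv_two_of_hasDerivAt_mul_const hγ,
    deriv_pow_of_hasDerivAt_mul_const hγ, (hγ t).deriv, mul_assoc]

end LeftInvariantCurve

section Casimir
variable {N : ℕ} {ι : Type} [Fintype ι] [DecidableEq ι] {X : ι → Matrix (Fin N) (Fin N) ℂ}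

theorem IsSkewHerm.star_trace_mul {A B : Matrix (Fin N) (Fin N) ℂ} (hA : IsSkewHerm A)
    (hB : IsSkewHerm B) : star (trace (A * B)) = trace (A * B) := by
  rw [← trace_conjTranspose, conjTranspose_mul, hA, hB, neg_mul_neg, trace_mul_comm]

theorem exists_isSkewHerm_add_I_smul (B : Matrix (Fin N) (Fin N) ℂ) :
    ∃ A₁ A₂, IsSkewHerm A₁ ∧ IsSkewHerm A₂ ∧ A₁ + Complex.I • A₂ = B := by
  refine ⟨(2⁻¹ : ℂ) • (B - Bᴴ), (-Complex.I / 2) • (B + Bᴴ), ?_, ?_, ?_⟩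
  · simp only [IsSkewHerm, conjTranspose_smul, conjTranspose_sub, conjTranspose_conjTranspose,
      star_inv₀, star_ofNat]
    module
  · simp only [IsSkewHerm, conjTranspose_smul, conjTranspose_add, conjTranspose_conjTranspose,
      star_div₀, star_neg, RCLike.star_def, Complex.conj_I, neg_neg, star_ofNat]
    module
  · rw [smul_smul, mul_div_assoc', mul_neg, Complex.I_mul_I, neg_neg]
    module

theorem IsONB.sum_trace_mul_smul_of_isSkewHerm (hX : IsONB X) {A : Matrix (Fin N) (Fin N) ℂ}
    (hA : IsSkewHerm A) : ∑ i, ((N : ℂ) * trace (X i * A)) • X i = -A := by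
  obtain ⟨hskew, -, hspan⟩ := hX
  conv_rhs => rw [hspan A hA, ← sum_neg_distrib]
  refine sum_congr rfl fun i _ => ?_
  have hreal : ((trace (X i * A)).re : ℂ) = trace (X i * A) :=
    Complex.conj_eq_iff_re.1 ((hskew i).star_trace_mul hA)
  rw [hskew i, neg_mul, trace_neg, Complex.neg_re, ← neg_smul, ← Complex.coe_smul]
  push_cast [hreal]
  ring_nf

theorem IsONB.sum_trace_mul_smul (hX : IsONB X) (B : Matrix (Fin N) (Fin N) ℂ) :
    ∑ i, ((N : ℂ) * trace (X i * B)) • X i = -B := by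
  obtain ⟨A₁, A₂, hA₁, hA₂, rfl⟩ := exists_isSkewHerm_add_I_smul B
  calc ∑ i, ((N : ℂ) * trace (X i * (A₁ + Complex.I • A₂))) • X i
      = ∑ i, ((N : ℂ) * trace (X i * A₁)) • X i
          + Complex.I • ∑ i, ((N : ℂ) * trace (X i * A₂)) • X i := by
        simp only [smul_sum, ← sum_add_distrib, smul_smul, ← add_smul, mul_add, trace_add,
          mul_smul_comm, trace_smul, smul_eq_mul]
        exact sum_congr rfl fun i _ => by ring_nf
    _ = -(A₁ + Complex.I • A₂) := by
        rw [hX.sum_trace_mul_smul_of_isSkewHerm hA₁, hX.sum_trace_mul_smul_of_isSkewHerm hA₂]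
        module

theorem IsONB.sum_apply_mul_apply (hX : IsONB X) (a b c d : Fin N) :
    ∑ i, X i a b * X i c d = -(N : ℂ)⁻¹ * Matrix.single b a 1 c d := by
  have hN : (N : ℂ) ≠ 0 := Nat.cast_ne_zero.2 (Fin.pos a).ne'
  have h := congr_fun₂ (hX.sum_trace_mul_smul (Matrix.single b a 1)) c d
  simp only [trace_mul_single, Matrix.sum_apply, Matrix.smul_apply, Matrix.neg_apply,
    MulOpposite.op_one, one_smul, smul_eq_mul] at h
  rw [neg_mul, ← mul_neg, ← h, mul_sum]
  exact sum_congr rfl fun i _ => by field_simp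

theorem IsONB.sum_mul_mul (hX : IsONB X) (B : Matrix (Fin N) (Fin N) ℂ) :
    ∑ i, X i * B * X i = -ntr B • (1 : Matrix (Fin N) (Fin N) ℂ) := by
  ext a d
  calc (∑ i, X i * B * X i) a d = ∑ c, ∑ b, B b c * ∑ i, X i a b * X i c d := by
        simp only [Matrix.sum_apply, mul_apply, sum_mul, mul_sum]
        rw [sum_comm]
        refine sum_congr rfl fun c _ => ?_
        rw [sum_comm]
        exact sum_congr rfl fun b _ => sum_congr rfl fun i _ => by ring
    _ = _ := by
        rw [Matrix.smul_apply, Matrix.one_apply]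
        split_ifs with had
        · subst had
          simp [hX.sum_apply_mul_apply, Matrix.single, ntr, trace, mul_sum, mul_comm]
        · simp [hX.sum_apply_mul_apply, Matrix.single, had]

theorem IsONB.sum_mul_self (hX : IsONB X) : ∑ i, X i * X i = -1 := by
  rcases N.eq_zero_or_pos with rfl | hN
  · exact Subsingleton.elim _ _
  · simpa [ntr, hN.ne'] using hX.sum_mul_mul 1

end Casimir

theorem sum_Ico_one_natCast_smul_eq_sum_range {R M : Type*} [Semiring R] [AddCommMonoid M]
    [Module R M] (f : ℕ → M) (k : ℕ) :
    ∑ m ∈ Ico 1 k, (m : R) • f m = ∑ m ∈ range k, (m : R) • f m := by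
  refine sum_subset (fun m hm => mem_range.2 (mem_Ico.1 hm).2) fun m hm hm' => ?_
  obtain rfl : m = 0 := by simp only [mem_range, mem_Ico, not_and, not_lt] at hm hm'; omega
  simp

section MatrixCurves

-- Any norm on matrices induces the product topology used by `exp` in `lap`; the operator norm
-- just makes matrices a normed algebra, so that matrix-valued curves can be differentiated.
attribute [local instance] Matrix.linftyOpNormedRing Matrix.linftyOpNormedAlgebra

variable {N : ℕ} {ι : Type} [Fintype ι] {X : ι → Matrix (Fin N) (Fin N) ℂ}

-- Stated for matrices rather than in a Banach algebra so that `exp` carries the product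
-- topology appearing in `lap`: the two topologies agree only up to unfolding, not syntactically.
theorem hasDerivAt_mul_exp_smul (U Y : Matrix (Fin N) (Fin N) ℂ) (t : ℝ) :
    HasDerivAt (fun s : ℝ => U * NormedSpace.exp (s • Y)) (U * NormedSpace.exp (t • Y) * Y) t :=
  ((hasDerivAt_exp_smul_const Y t).const_mul U).congr_deriv (mul_assoc _ _ _).symm

theorem contDiffAt_pow_mul_exp_smul (U Y : Matrix (Fin N) (Fin N) ℂ) (k : ℕ) :
    ContDiffAt ℝ 2 (fun t : ℝ => (U * NormedSpace.exp (t • Y)) ^ k) 0 :=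
  ((contDiff_of_hasDerivAt_mul_const (hasDerivAt_mul_exp_smul U Y) 2).pow k).contDiffAt

theorem mlap_eq_sum_iteratedDeriv (f : Matrix (Fin N) (Fin N) ℂ → Matrix (Fin N) (Fin N) ℂ)
    (U : Matrix (Fin N) (Fin N) ℂ)
    (hf : ∀ i, ContDiffAt ℝ 2 (fun t : ℝ => f (U * NormedSpace.exp (t • X i))) 0) :
    mlap X f U = ∑ i, iteratedDeriv 2 (fun t : ℝ => f (U * NormedSpace.exp (t • X i))) 0 := by
  ext a b
  simp only [mlap, lap, of_apply, Matrix.sum_apply]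
  refine sum_congr rfl fun i _ => ?_
  exact (LinearMap.toContinuousLinearMap (entryLinearMap ℝ ℂ a b)).iteratedDeriv_comp_left (hf i)

theorem IsONB.sum_iteratedDeriv_two_pow [DecidableEq ι] (hX : IsONB X)
    (U : Matrix (Fin N) (Fin N) ℂ) (k : ℕ) :
    ∑ i, iteratedDeriv 2 (fun t : ℝ => (U * NormedSpace.exp (t • X i)) ^ k) 0
      = (-(k : ℂ)) • U ^ k - (2 : ℂ) • ∑ m ∈ range k, (m : ℂ) • (ntr (U ^ (k - m)) • U ^ m) := by
  induction k with
  | zero => simp [iteratedDeriv_const]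
  | succ k ih =>
    have hcross : ∑ i, U * X i * ∑ m ∈ range k, U ^ (k - m) * X i * U ^ m
        = -∑ m ∈ range k, ntr (U ^ (k - m)) • U ^ (m + 1) := by
      calc ∑ i, U * X i * ∑ m ∈ range k, U ^ (k - m) * X i * U ^ m
          = ∑ m ∈ range k, U * (∑ i, X i * U ^ (k - m) * X i) * U ^ m := by
            simp only [mul_sum, sum_mul, mul_assoc]
            exact sum_comm
        _ = _ := by
            simp only [hX.sum_mul_mul, ← sum_neg_distrib, pow_succ']
            refine sum_congr rfl fun m _ => ?_
            rw [mul_smul_comm, mul_one, smul_mul_assoc, neg_smul]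
    have hstep := fun i => iteratedDeriv_two_pow_succ_of_hasDerivAt_mul_const
      (hasDerivAt_mul_exp_smul U (X i)) k 0
    simp only [zero_smul, NormedSpace.exp_zero, mul_one] at hstep
    have hdiag : ∑ i, U * X i * X i = -U := by
      simp only [mul_assoc, ← mul_sum, hX.sum_mul_self, mul_neg, mul_one]
    simp only [hstep, sum_add_distrib, ← mul_sum, ← sum_mul, ih, hcross, hdiag]
    rw [sum_range_succ']
    simp only [Nat.add_sub_add_right, Nat.cast_add, Nat.cast_one, add_smul, one_smul,
      sum_add_distrib, mul_sub, mul_smul_comm, mul_sum, ← pow_succ', two_mul, neg_mul,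
      Nat.cast_zero, zero_smul, add_zero]
    module

end MatrixCurves

theorem laplacian_of_power_general
    (N : ℕ) (ι : Type) [Fintype ι] [DecidableEq ι]
    (X : ι → Matrix (Fin N) (Fin N) ℂ) (hX : IsONB X)
    (k : ℕ) (U : Matrix (Fin N) (Fin N) ℂ) :
    mlap X (fun V => V ^ k) U
      = (-(k : ℂ)) • U ^ k
        - (2 : ℂ) • ∑ m ∈ Finset.Ico 1 k, (m : ℂ) • (ntr (U ^ (k - m)) • U ^ m) := by
  rw [sum_Ico_one_natCast_smul_eq_sum_range, ← hX.sum_iteratedDeriv_two_pow]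
  exact mlap_eq_sum_iteratedDeriv _ U fun i => contDiffAt_pow_mul_exp_smul U (X i) k

/-- `Δ_N(U^k) = -k U^k - 2 Σ_{m=1}^{k-1} m U^m tr(U^(k-m))`. -/
theorem laplacian_of_power
    (N : ℕ) (hN : 0 < N) (ι : Type) [Fintype ι] [DecidableEq ι]
    (X : ι → Matrix (Fin N) (Fin N) ℂ) (hX : IsONB X)
    (k : ℕ) (hk : 0 < k) (U : Matrix (Fin N) (Fin N) ℂ)
    (hU : U ∈ Matrix.unitaryGroup (Fin N) ℂ) :
    mlap X (fun V => V ^ k) U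
      = (-(k : ℂ)) • U ^ k
        - (2 : ℂ) • ∑ m ∈ Finset.Ico 1 k, (m : ℂ) • (ntr (U ^ (k - m)) • U ^ m) :=
  laplacian_of_power_general N ι X hX k U
end

section
/- With Δ_N as above, for every positive integer k: Δ_N(tr(U^k)) = -k·tr(U^k) - 2 Σ_{m=1}^{k-1} m·tr(U^m)·tr(U^{k-m}), where tr is the normalized trace. -/
open Matrix MeasureTheory
open scoped BigOperators

/-!
Along `C(s) = U e^{sX}` one has `C' = C X`, so cyclicity of the trace gives
`d/ds tr(C^k) = k tr(C^k X)` and `d²/ds² tr(C^k)|₀ = k Σ_{i<k} tr(U^{k-i} X U^i X)`.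
Summed over an orthonormal basis of `u(N)`, the Casimir identity `Σ_j X_j B X_j = -tr(B) 1`
turns the `i`-th term into `-tr(U^{k-i}) tr(U^i)`; the symmetry `m ↔ k - m` of the resulting
sum produces the coefficients `2m`.
-/

open Finset

theorem two_mul_sum_Ico_natCast_mul_of_symm {R : Type*} [CommRing R] (k : ℕ) (b : ℕ → R)
    (hb : ∀ m ∈ Ico 1 k, b (k - m) = b m) :
    2 * ∑ m ∈ Ico 1 k, (m : R) * b m = k * ∑ m ∈ Ico 1 k, b m := by
  have hreflect := sum_Ico_reflect (fun m => (m : R) * b m) 1 (Nat.le_succ k)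
  rw [Nat.add_sub_cancel_left, Nat.add_sub_cancel] at hreflect
  have hmirror : ∑ m ∈ Ico 1 k, (m : R) * b m = ∑ m ∈ Ico 1 k, ((k : R) - m) * b m := by
    rw [← hreflect]
    refine sum_congr rfl fun m hm => ?_
    rw [Nat.cast_sub (mem_Ico.mp hm).2.le, hb m hm]
  rw [two_mul]
  nth_rewrite 2 [hmirror]
  rw [← sum_add_distrib, mul_sum]
  exact sum_congr rfl fun m _ => by ring

theorem natCast_mul_sum_range_mul_reflect {R : Type*} [CommRing R] (a : ℕ → R) (k : ℕ) :
    k * ∑ i ∈ range k, a (k - i) * a i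
      = k * (a k * a 0) + 2 * ∑ m ∈ Ico 1 k, (m : R) * (a m * a (k - m)) := by
  rcases k.eq_zero_or_pos with rfl | hk
  · simp
  have hsymm : ∀ m ∈ Ico 1 k, a (k - m) * a (k - (k - m)) = a m * a (k - m) := fun m hm => by
    rw [Nat.sub_sub_self (mem_Ico.mp hm).2.le, mul_comm]
  rw [two_mul_sum_Ico_natCast_mul_of_symm k _ hsymm, sum_range_eq_add_Ico _ hk, Nat.sub_zero,
    mul_add]
  congr 2
  exact sum_congr rfl fun m _ => mul_comm _ _

theorem ntr_mul_ntr_one {N : ℕ} (A : Matrix (Fin N) (Fin N) ℂ) :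
    ntr A * ntr (1 : Matrix (Fin N) (Fin N) ℂ) = ntr A := by
  rcases N.eq_zero_or_pos with rfl | hN
  · simp [ntr]
  · have hone : ntr (1 : Matrix (Fin N) (Fin N) ℂ) = 1 := by simp [ntr, hN.ne']
    rw [hone, mul_one]

theorem IsSkewHerm.conj_trace_conjTranspose_mul {N : ℕ} {X S : Matrix (Fin N) (Fin N) ℂ}
    (hX : IsSkewHerm X) (hS : IsSkewHerm S) :
    starRingEnd ℂ (trace (Xᴴ * S)) = trace (Xᴴ * S) := by
  change star _ = _
  rw [← trace_conjTranspose, conjTranspose_mul, conjTranspose_conjTranspose, hS, hX,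
    neg_mul, neg_mul, trace_neg, trace_neg, trace_mul_comm]

theorem exists_isSkewHerm_add_I_smul_eq {N : ℕ} (M : Matrix (Fin N) (Fin N) ℂ) :
    ∃ A B, IsSkewHerm A ∧ IsSkewHerm B ∧ A + Complex.I • B = M := by
  refine ⟨(2 : ℂ)⁻¹ • (M - Mᴴ), (-(Complex.I * 2⁻¹)) • (M + Mᴴ), ?_, ?_, ?_⟩
  · rw [IsSkewHerm, conjTranspose_smul, conjTranspose_sub, conjTranspose_conjTranspose,
      ← smul_neg, neg_sub]
    simp
  · rw [IsSkewHerm, conjTranspose_smul, conjTranspose_add, conjTranspose_conjTranspose,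
      add_comm, ← neg_smul]
    simp
  · ext a b
    simp only [Matrix.add_apply, Matrix.smul_apply, Matrix.sub_apply, smul_eq_mul]
    ring_nf
    rw [Complex.I_sq]
    ring

namespace IsONB

variable {N : ℕ} {ι : Type} [Fintype ι] [DecidableEq ι] {X : ι → Matrix (Fin N) (Fin N) ℂ}

theorem sum_trace_smul_of_isSkewHerm (hX : IsONB X) {S : Matrix (Fin N) (Fin N) ℂ}
    (hS : IsSkewHerm S) : ∑ i, ((N : ℂ) * trace ((X i)ᴴ * S)) • X i = S := by
  conv_rhs => rw [hX.2.2 S hS]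
  refine sum_congr rfl fun i _ => ?_
  rw [← Complex.coe_smul, Complex.ofReal_mul, Complex.ofReal_natCast,
    Complex.conj_eq_iff_re.mp ((hX.1 i).conj_trace_conjTranspose_mul hS)]

theorem sum_trace_smul (hX : IsONB X) (M : Matrix (Fin N) (Fin N) ℂ) :
    ∑ i, ((N : ℂ) * trace ((X i)ᴴ * M)) • X i = M := by
  obtain ⟨A, B, hA, hB, rfl⟩ := exists_isSkewHerm_add_I_smul_eq M
  conv_rhs => rw [← hX.sum_trace_smul_of_isSkewHerm hA, ← hX.sum_trace_smul_of_isSkewHerm hB]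
  rw [smul_sum, ← sum_add_distrib]
  refine sum_congr rfl fun i _ => ?_
  rw [mul_add, trace_add, Matrix.mul_smul, trace_smul, smul_smul, ← add_smul, smul_eq_mul]
  ring_nf

theorem sum_apply_mul_apply_s8 (hX : IsONB X) (a b c d : Fin N) :
    ∑ i, X i a b * X i c d = -(N : ℂ)⁻¹ * (if b = c ∧ a = d then 1 else 0) := by
  have hN : (N : ℂ) ≠ 0 := Nat.cast_ne_zero.mpr (Fin.pos a).ne'
  have htrace : ∀ i, trace ((X i)ᴴ * single b a (1 : ℂ)) = -X i a b := fun i => by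
    rw [hX.1 i, neg_mul, trace_neg, trace_mul_single, MulOpposite.op_one, one_smul]
  have hentry := congrFun (congrFun (hX.sum_trace_smul (single b a 1)) c) d
  simp only [htrace, Matrix.sum_apply, Matrix.smul_apply, smul_eq_mul, single_apply] at hentry
  rw [← hentry, mul_sum]
  refine sum_congr rfl fun i _ => ?_
  field_simp

theorem sum_mul_mul_s8 (hX : IsONB X) (B : Matrix (Fin N) (Fin N) ℂ) :
    ∑ i, X i * B * X i = (-(N : ℂ)⁻¹ * trace B) • 1 := by
  ext a d
  calc (∑ i, X i * B * X i) a d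
      = ∑ c, ∑ b, B b c * ∑ i, X i a b * X i c d := by
        simp only [Matrix.sum_apply, mul_apply, sum_mul, mul_sum]
        rw [sum_comm]
        refine sum_congr rfl fun c _ => ?_
        rw [sum_comm]
        exact sum_congr rfl fun b _ => sum_congr rfl fun i _ => by ring
    _ = ((-(N : ℂ)⁻¹ * trace B) • (1 : Matrix (Fin N) (Fin N) ℂ)) a d := by
        simp only [hX.sum_apply_mul_apply_s8, Matrix.smul_apply, one_apply, trace, diag_apply]
        by_cases had : a = d <;> simp [had, mul_sum, mul_comm]

theorem sum_ntr_mul_mul (hX : IsONB X) (A B : Matrix (Fin N) (Fin N) ℂ) :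
    ∑ i, ntr (A * X i * B * X i) = -(ntr A * ntr B) := by
  simp only [ntr, ← mul_sum, mul_assoc A]
  rw [← trace_sum, ← mul_sum, hX.sum_mul_mul_s8, Matrix.mul_smul, trace_smul, mul_one, smul_eq_mul]
  ring

end IsONB

section TracialDerivative

variable {𝕜 𝔸 F : Type*} [NontriviallyNormedField 𝕜] [NormedRing 𝔸] [NormedAlgebra 𝕜 𝔸]
  [NormedAddCommGroup F] [NormedSpace 𝕜 F] {C : 𝕜 → 𝔸} {X : 𝔸} {s : 𝕜}

theorem HasDerivAt.clm_apply_pow_of_tracial (τ : 𝔸 →L[𝕜] F) (hτ : ∀ a b, τ (a * b) = τ (b * a))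
    (hC : HasDerivAt C (C s * X) s) (k : ℕ) :
    HasDerivAt (fun t => τ (C t ^ k)) (k • τ (C s ^ k * X)) s := by
  have hterm : ∀ i ∈ range k,
      τ (C s ^ (k.pred - i) * (C s * X) * C s ^ i) = τ (C s ^ k * X) := by
    intro i hi
    have hik : i + (k.pred - i) + 1 = k := by
      have := mem_range.mp hi; rw [Nat.pred_eq_sub_one]; omega
    rw [hτ, ← mul_assoc, ← mul_assoc, ← pow_add, ← pow_succ, hik]
  have h := τ.hasFDerivAt.comp_hasDerivAt s (hC.fun_pow' k)
  rwa [map_sum, sum_congr rfl hterm, sum_const, card_range] at h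

theorem HasDerivAt.clm_apply_pow_mul (τ : 𝔸 →L[𝕜] F) (hC : HasDerivAt C (C s * X) s) (k : ℕ) :
    HasDerivAt (fun t => τ (C t ^ k * X))
      (∑ i ∈ range k, τ (C s ^ (k - i) * X * C s ^ i * X)) s := by
  have hterm : ∀ i ∈ range k,
      τ (C s ^ (k.pred - i) * (C s * X) * C s ^ i * X) = τ (C s ^ (k - i) * X * C s ^ i * X) := by
    intro i hi
    have hik : k.pred - i + 1 = k - i := by have := mem_range.mp hi; rw [Nat.pred_eq_sub_one]; omega
    rw [← mul_assoc, ← pow_succ, hik]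
  have h := τ.hasFDerivAt.comp_hasDerivAt s ((hC.fun_pow' k).mul_const X)
  rwa [sum_mul, map_sum, sum_congr rfl hterm] at h

end TracialDerivative

theorem iteratedDeriv_two_clm_apply_pow_mul_exp {𝕂 𝔸 F : Type*} [RCLike 𝕂] [NormedRing 𝔸]
    [NormedAlgebra 𝕂 𝔸] [CompleteSpace 𝔸] [NormedAddCommGroup F] [NormedSpace 𝕂 F]
    (τ : 𝔸 →L[𝕂] F) (hτ : ∀ a b, τ (a * b) = τ (b * a)) (U X : 𝔸) (k : ℕ) :
    iteratedDeriv 2 (fun s : 𝕂 => τ ((U * NormedSpace.exp (s • X)) ^ k)) 0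
      = k • ∑ i ∈ range k, τ (U ^ (k - i) * X * U ^ i * X) := by
  set C : 𝕂 → 𝔸 := fun s => U * NormedSpace.exp (s • X)
  have hC : ∀ s, HasDerivAt C (C s * X) s := fun s =>
    ((hasDerivAt_exp_smul_const X s).const_mul U).congr_deriv (mul_assoc _ _ _).symm
  have hfirst : deriv (fun s => τ (C s ^ k)) = fun s => k • τ (C s ^ k * X) :=
    funext fun s => ((hC s).clm_apply_pow_of_tracial τ hτ k).deriv
  have hsecond := ((hC 0).clm_apply_pow_mul τ k).const_smul k
  have hC0 : C 0 = U := by simp [C]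
  rw [iteratedDeriv_succ, iteratedDeriv_one, hfirst, ← hC0]
  exact hsecond.deriv

section Laplacian

/- Any norm will do for the matrix curves `U e^{sX}`: `lap` only differentiates scalar
functions, and `NormedSpace.exp` depends on the topology alone. -/
attribute [local instance] Matrix.linftyOpNormedRing Matrix.linftyOpNormedAlgebra

theorem IsONB.lap_ntr_pow {N : ℕ} {ι : Type} [Fintype ι] [DecidableEq ι]
    {X : ι → Matrix (Fin N) (Fin N) ℂ} (hX : IsONB X) (k : ℕ) (U : Matrix (Fin N) (Fin N) ℂ) :
    lap X (fun V => ntr (V ^ k)) U = -k * ∑ i ∈ range k, ntr (U ^ (k - i)) * ntr (U ^ i) := by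
  let τ := LinearMap.toContinuousLinearMap ((N : ℂ)⁻¹ • traceLinearMap (Fin N) ℝ ℂ)
  have hsecond : ∀ j, iteratedDeriv 2 (fun s : ℝ => ntr ((U * NormedSpace.exp (s • X j)) ^ k)) 0
      = k • ∑ i ∈ range k, ntr (U ^ (k - i) * X j * U ^ i * X j) := fun j =>
    iteratedDeriv_two_clm_apply_pow_mul_exp τ
      (fun a b => show ntr (a * b) = ntr (b * a) by rw [ntr, ntr, trace_mul_comm]) U (X j) k
  rw [lap, sum_congr rfl fun j _ => hsecond j, ← smul_sum, sum_comm,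
    sum_congr rfl fun i _ => hX.sum_ntr_mul_mul _ _, sum_neg_distrib, nsmul_eq_mul, mul_neg,
    neg_mul]

end Laplacian

theorem laplacian_of_trace_power_general
    (N : ℕ) (ι : Type) [Fintype ι] [DecidableEq ι]
    (X : ι → Matrix (Fin N) (Fin N) ℂ) (hX : IsONB X)
    (k : ℕ) (U : Matrix (Fin N) (Fin N) ℂ) :
    lap X (fun V => ntr (V ^ k)) U
      = -(k : ℂ) * ntr (U ^ k)
        - 2 * ∑ m ∈ Finset.Ico 1 k, (m : ℂ) * (ntr (U ^ m) * ntr (U ^ (k - m))) := by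
  have hsplit := natCast_mul_sum_range_mul_reflect (fun m => ntr (U ^ m)) k
  rw [pow_zero, ntr_mul_ntr_one] at hsplit
  rw [hX.lap_ntr_pow, neg_mul, hsplit]
  ring

/-- `Δ_N(tr(U^k)) = -k tr(U^k) - 2 Σ_{m=1}^{k-1} m tr(U^m) tr(U^(k-m))`. -/
theorem laplacian_of_trace_power
    (N : ℕ) (hN : 0 < N) (ι : Type) [Fintype ι] [DecidableEq ι]
    (X : ι → Matrix (Fin N) (Fin N) ℂ) (hX : IsONB X)
    (k : ℕ) (hk : 0 < k) (U : Matrix (Fin N) (Fin N) ℂ)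
    (hU : U ∈ Matrix.unitaryGroup (Fin N) ℂ) :
    lap X (fun V => ntr (V ^ k)) U
      = -(k : ℂ) * ntr (U ^ k)
        - 2 * ∑ m ∈ Finset.Ico 1 k, (m : ℂ) * (ntr (U ^ m) * ntr (U ^ (k - m))) :=
  laplacian_of_trace_power_general N ι X hX k U
end
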